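/- Under the fixed-order modified Metropolis chain, if p(f_{≥i}(x)) ≥ p(f_{≥i+1}(x)) for some i ∈ {1,…,n}, then the state f_i(x) is reachable from x. -/

import Mathlib

/-! Two sweeps suffice. Every single-site flip has positive probability, so the first sweep can
flip all coordinates, reaching `f_{≥1}(x)`. The second sweep flips sites `1, …, i-1`, passing
through `f_{≥j}(x)`; at site `i` it can stay put, because `p(f_{≥i+1}(x)) ≤ p(f_{≥i}(x))` makes
the modified flip probability there strictly less than `1`; it then flips sites `i+1, …, n`,
ending at `f_i(x)`. -/

open Matrix

/-- Flip the `i`-th coordinate of `x`. -/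
def flipAt {n : ℕ} (i : Fin n) (x : Fin n → Bool) : Fin n → Bool :=
  Function.update x i (!x i)

/-- Flip the first `k` coordinates of `x` (1-indexed coordinates `1..k`). -/
def fle {n : ℕ} (k : ℕ) (x : Fin n → Bool) : Fin n → Bool :=
  fun j => if j.val < k then !x j else x j

/-- Flip coordinates `k..n` (1-indexed) of `x`; `fge (n+1) x = x`. -/
def fge {n : ℕ} (k : ℕ) (x : Fin n → Bool) : Fin n → Bool :=
  fun j => if k ≤ j.val + 1 then !x j else x j

/-- Modified Metropolis flip probability at site `i`. -/
noncomputable def flipMod {n : ℕ} (p : (Fin n → Bool) → ℝ) (i : Fin n)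
    (x : Fin n → Bool) : ℝ :=
  if p x < p (flipAt i x) then 1
  else if p (flipAt i x) < p x then p (flipAt i x) / p x
  else 1 / 2

/-- Standard Metropolis flip probability at site `i`. -/
noncomputable def flipStd {n : ℕ} (p : (Fin n → Bool) → ℝ) (i : Fin n)
    (x : Fin n → Bool) : ℝ :=
  min 1 (p (flipAt i x) / p x)

/-- Single-site transition matrix of the modified Metropolis operator. -/
noncomputable def Tmod {n : ℕ} (p : (Fin n → Bool) → ℝ) (i : Fin n) :
    Matrix (Fin n → Bool) (Fin n → Bool) ℝ :=
  fun x y =>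
    if y = flipAt i x then flipMod p i x
    else if y = x then 1 - flipMod p i x
    else 0

/-- Single-site transition matrix of the standard Metropolis operator. -/
noncomputable def Tstd {n : ℕ} (p : (Fin n → Bool) → ℝ) (i : Fin n) :
    Matrix (Fin n → Bool) (Fin n → Bool) ℝ :=
  fun x y =>
    if y = flipAt i x then flipStd p i x
    else if y = x then 1 - flipStd p i x
    else 0

/-- Full sweep `T = T_n ∘ ⋯ ∘ T_1` (apply `T_1` first) of the modified operators. -/
noncomputable def sweep {n : ℕ} (p : (Fin n → Bool) → ℝ) :
    Matrix (Fin n → Bool) (Fin n → Bool) ℝ :=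
  (List.ofFn (fun i : Fin n => Tmod p i)).prod

/-- Full sweep of the standard Metropolis operators. -/
noncomputable def sweepStd {n : ℕ} (p : (Fin n → Bool) → ℝ) :
    Matrix (Fin n → Bool) (Fin n → Bool) ℝ :=
  (List.ofFn (fun i : Fin n => Tstd p i)).prod

namespace Matrix

variable {S R : Type*} [Fintype S] [Semiring R] [PartialOrder R] [IsOrderedRing R]

theorem mul_apply_pos_of_nonneg [PosMulStrictMono R] {A B : Matrix S S R}
    (hA : ∀ a b, 0 ≤ A a b) (hB : ∀ a b, 0 ≤ B a b) {a b c : S}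
    (hab : 0 < A a b) (hbc : 0 < B b c) : 0 < (A * B) a c :=
  (mul_pos hab hbc).trans_le <|
    Finset.single_le_sum (f := fun d => A a d * B d c)
      (fun d _ => mul_nonneg (hA a d) (hB d c)) (Finset.mem_univ b)

variable [DecidableEq S]

theorem list_prod_apply_nonneg {L : List (Matrix S S R)} (hL : ∀ M ∈ L, ∀ a b, 0 ≤ M a b)
    (a b : S) : 0 ≤ L.prod a b := by
  induction L generalizing a b with
  | nil => rw [List.prod_nil, one_apply]; split_ifs <;> simp
  | cons M L ih =>
    rw [List.prod_cons, mul_apply]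
    exact Finset.sum_nonneg fun c _ => mul_nonneg (hL M List.mem_cons_self a c)
      (ih (fun N hN => hL N (List.mem_cons_of_mem M hN)) c b)

theorem list_prod_ofFn_apply_pos [PosMulStrictMono R] [Nontrivial R] {m : ℕ}
    (M : Fin m → Matrix S S R) (hM : ∀ j a b, 0 ≤ M j a b) (s : ℕ → S)
    (hs : ∀ j : Fin m, 0 < M j (s j) (s (j + 1))) :
    0 < (List.ofFn M).prod (s 0) (s m) := by
  induction m generalizing s with
  | zero => simp
  | succ m ih =>
    rw [List.ofFn_succ, List.prod_cons]
    refine mul_apply_pos_of_nonneg (hM 0) (list_prod_apply_nonneg ?_) (hs 0)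
      (ih _ (fun j => hM j.succ) (fun j => s (j + 1)) fun j => hs j.succ)
    simpa using fun (j : Fin m) => hM j.succ

end Matrix

section Flips

variable {n : ℕ}

theorem flipAt_apply (i : Fin n) (x : Fin n → Bool) (m : Fin n) :
    flipAt i x m = if m = i then !x m else x m := by
  by_cases hm : m = i <;> simp [flipAt, hm]

theorem flipAt_ne_self (i : Fin n) (x : Fin n → Bool) : flipAt i x ≠ x :=
  fun h => by simpa [flipAt_apply] using congrFun h i

theorem flipAt_flipAt (i : Fin n) (x : Fin n → Bool) : flipAt i (flipAt i x) = x := by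
  funext m; by_cases hm : m = i <;> simp [flipAt_apply, hm]

theorem flipAt_comm (i j : Fin n) (x : Fin n → Bool) :
    flipAt i (flipAt j x) = flipAt j (flipAt i x) := by
  funext m; simp only [flipAt_apply]; split_ifs <;> simp_all

theorem fle_zero (x : Fin n → Bool) : fle 0 x = x := by
  funext m; simp [fle]

theorem fge_one (x : Fin n → Bool) : fge 1 x = fle n x := by
  funext m; simp [fge, fle]

theorem fge_succ_eq_self (x : Fin n → Bool) : fge (n + 1) x = x := by
  funext m; simp [fge]

theorem flipAt_fle (j : Fin n) (x : Fin n → Bool) : flipAt j (fle j x) = fle (j + 1) x := by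
  funext m; simp only [flipAt_apply, fle, Fin.ext_iff]; split_ifs <;> first | omega | simp

theorem flipAt_fge (j : Fin n) (x : Fin n → Bool) :
    flipAt j (fge (j + 1) x) = fge (j + 2) x := by
  funext m; simp only [flipAt_apply, fge, Fin.ext_iff]; split_ifs <;> first | omega | simp

end Flips

section Sweep

variable {n : ℕ} {p : (Fin n → Bool) → ℝ}

theorem flipMod_pos (hp : ∀ x, 0 < p x) (i : Fin n) (x : Fin n → Bool) : 0 < flipMod p i x := by
  unfold flipMod
  split_ifs
  · exact one_pos
  · exact div_pos (hp _) (hp _)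
  · exact one_half_pos

theorem flipMod_le_one (hp : ∀ x, 0 < p x) (i : Fin n) (x : Fin n → Bool) :
    flipMod p i x ≤ 1 := by
  unfold flipMod
  split_ifs with _ hlt
  · exact le_rfl
  · exact (div_lt_one (hp x)).2 hlt |>.le
  · norm_num

theorem flipMod_lt_one (hp : ∀ x, 0 < p x) {i : Fin n} {x : Fin n → Bool}
    (h : p (flipAt i x) ≤ p x) : flipMod p i x < 1 := by
  unfold flipMod
  rw [if_neg h.not_gt]
  split_ifs with hlt
  · exact (div_lt_one (hp x)).2 hlt
  · norm_num

theorem Tmod_apply_flipAt (i : Fin n) (x : Fin n → Bool) :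
    Tmod p i x (flipAt i x) = flipMod p i x :=
  if_pos rfl

theorem Tmod_apply_self (i : Fin n) (x : Fin n → Bool) : Tmod p i x x = 1 - flipMod p i x := by
  rw [Tmod, if_neg (flipAt_ne_self i x).symm, if_pos rfl]

theorem Tmod_apply_nonneg (hp : ∀ x, 0 < p x) (i : Fin n) (x y : Fin n → Bool) :
    0 ≤ Tmod p i x y := by
  unfold Tmod
  split_ifs
  · exact (flipMod_pos hp i x).le
  · exact sub_nonneg.2 (flipMod_le_one hp i x)
  · exact le_rfl

theorem sweep_apply_nonneg (hp : ∀ x, 0 < p x) (x y : Fin n → Bool) : 0 ≤ sweep p x y :=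
  Matrix.list_prod_apply_nonneg (by simpa using Tmod_apply_nonneg hp) x y

theorem sweep_apply_pos_of_walk (hp : ∀ x, 0 < p x) (s : ℕ → Fin n → Bool)
    (hs : ∀ j : Fin n, s (j + 1) = flipAt j (s j) ∨
      s (j + 1) = s j ∧ p (flipAt j (s j)) ≤ p (s j)) :
    0 < sweep p (s 0) (s n) := by
  refine Matrix.list_prod_ofFn_apply_pos _ (Tmod_apply_nonneg hp) s fun j => ?_
  rcases hs j with hflip | ⟨hstay, hle⟩
  · rw [hflip, Tmod_apply_flipAt]
    exact flipMod_pos hp j (s j)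
  · rw [hstay, Tmod_apply_self]
    exact sub_pos.2 (flipMod_lt_one hp hle)

theorem sweep_apply_fle_pos (hp : ∀ x, 0 < p x) (x : Fin n → Bool) :
    0 < sweep p x (fle n x) := by
  simpa only [fle_zero] using
    sweep_apply_pos_of_walk hp (fun j => fle j x) fun j => .inl (flipAt_fle j x).symm

theorem sweep_apply_fge_one_flipAt_pos (hp : ∀ x, 0 < p x) (x : Fin n → Bool) (i : Fin n)
    (h : p (fge (i.val + 2) x) ≤ p (fge (i.val + 1) x)) :
    0 < sweep p (fge 1 x) (flipAt i x) := by
  let s : ℕ → Fin n → Bool := fun j =>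
    if j ≤ i.val then fge (j + 1) x else flipAt i (fge (j + 1) x)
  have hs_le {j : ℕ} (hj : j ≤ i.val) : s j = fge (j + 1) x := if_pos hj
  have hs_gt {j : ℕ} (hj : i.val < j) : s j = flipAt i (fge (j + 1) x) := if_neg hj.not_ge
  have hwalk := sweep_apply_pos_of_walk hp s fun j => by
    rcases lt_trichotomy j.val i.val with hj | hj | hj
    · left
      rw [hs_le hj, hs_le hj.le, flipAt_fge]
    · right
      obtain rfl : j = i := Fin.ext hj
      rw [hs_gt (Nat.lt_succ_self _), hs_le le_rfl, ← flipAt_fge, flipAt_flipAt, flipAt_fge]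
      exact ⟨rfl, h⟩
    · left
      rw [hs_gt hj, hs_gt (Nat.lt_succ_of_lt hj), flipAt_comm, flipAt_fge]
  simpa [s, fge_succ_eq_self, i.isLt.not_ge] using hwalk

end Sweep

/-- If `p(f_{≥i}(x)) ≥ p(f_{≥i+1}(x))` then `f_i(x)` is reachable from `x`
under the fixed-order modified Metropolis chain. -/
theorem stmt8 {n : ℕ} (p : (Fin n → Bool) → ℝ) (hp : ∀ x, 0 < p x)
    (x : Fin n → Bool) (i : Fin n)
    (h : p (fge (i.val + 2) x) ≤ p (fge (i.val + 1) x)) :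
    ∃ k : ℕ, 1 ≤ k ∧ 0 < (sweep p ^ k) x (flipAt i x) := by
  refine ⟨2, one_le_two, ?_⟩
  rw [sq]
  refine Matrix.mul_apply_pos_of_nonneg (sweep_apply_nonneg hp) (sweep_apply_nonneg hp)
    (sweep_apply_fle_pos hp x) ?_
  rw [← fge_one]
  exact sweep_apply_fge_one_flipAt_pos hp x i h
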